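/- Consider the online pricing model with η-pessimistic buyers, where the seller runs the two-phase pricing algorithm with parameter λ ∈ (0,1], and suppose q_min ≤ 2λ. Let E_2 be the event that for every round t > t_λ and every active type i ∈ S_t with q_i ≥ λ/2, the number of reviews left by type-i buyers before round t is at least (1/4)·λ·(t−1). Then Pr(E_2^c) ≤ 1/T. -/

import Mathlib

open MeasureTheory ProbabilityTheory Finset
open scoped ENNReal Classical

/-- The online pricing model with `d` buyer types and `T` rounds (rounds are indexed
`1, …, T`).  Types arrive i.i.d. from the distribution `q` on `Fin d`; type `i` has
ex-ante value `θ i` and ex-post value distribution `D i` supported on `[0,1]` with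
mean `θ i`.  The ex-post values are pre-generated: the buyer of round `s`, if of type
`i` and purchasing, reports the review `vdraw s i`.  The seller posts the price
`price t` on round `t`, the buyer of round `t` uses the threshold `tau t` and buys
iff `price t ≤ tau t` (field `buy`, constrained by `BuyerRule` below). -/
structure PricingModel (Ω : Type) [MeasurableSpace Ω] where
  d : ℕ
  T : ℕ
  hd : 1 ≤ d
  hT : 1 ≤ T
  η : ℝ
  hη : η ∈ Set.Ioo (0:ℝ) 1
  lam : ℝ
  hlam : lam ∈ Set.Ioc (0:ℝ) 1
  q : Fin d → ℝ
  hq_nonneg : ∀ i, 0 ≤ q i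
  hq_sum : ∑ i, q i = 1
  θ : Fin d → ℝ
  hθ_mem : ∀ i, θ i ∈ Set.Icc (0:ℝ) 1
  hθ_mono : Monotone θ
  Pr : Measure Ω
  hPr : IsProbabilityMeasure Pr
  D : Fin d → Measure ℝ
  hD_prob : ∀ i, IsProbabilityMeasure (D i)
  hD_supp : ∀ i, (D i) (Set.Icc (0:ℝ) 1) = 1
  hD_mean : ∀ i, (∫ x, x ∂(D i)) = θ i
  itype : ℕ → Ω → Fin d
  vdraw : ℕ → Fin d → Ω → ℝ
  h_itype_meas : ∀ s, Measurable (itype s)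
  h_vdraw_meas : ∀ s i, Measurable (vdraw s i)
  h_itype_law : ∀ s i, Pr {ω | itype s ω = i} = ENNReal.ofReal (q i)
  h_vdraw_law : ∀ s i, Measure.map (vdraw s i) Pr = D i
  h_indep : iIndepFun
      (fun s ω => (itype s ω, fun i => vdraw s i ω)) Pr
  h_indep_within : ∀ s, IndepFun (itype s) (fun ω i => vdraw s i ω) Pr
  price : ℕ → Ω → ℝ
  tau : ℕ → Ω → ℝ
  buy : ℕ → Ω → Bool
  pstar : ℝ
  hpstar_mem : pstar ∈ Set.Icc (0:ℝ) 1
  hpstar_opt : ∀ p ∈ Set.Icc (0:ℝ) 1,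
      p * (∑ i, if p ≤ θ i then q i else 0) ≤ pstar * (∑ i, if pstar ≤ θ i then q i else 0)

namespace PricingModel

variable {Ω : Type} [MeasurableSpace Ω] (M : PricingModel Ω)

/-- The review left on round `s` (relevant only if a purchase occurred). -/
noncomputable def review (s : ℕ) (ω : Ω) : ℝ := M.vdraw s (M.itype s ω) ω

/-- Rounds before round `t` on which a buyer of type `i` purchased (and hence reviewed). -/
noncomputable def Phi (i : Fin M.d) (t : ℕ) (ω : Ω) : Finset ℕ :=
  (Finset.Ico 1 t).filter (fun s => M.buy s ω = true ∧ M.itype s ω = i)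

/-- Number of reviews by buyers of type `i` before round `t`. -/
noncomputable def nPhi (i : Fin M.d) (t : ℕ) (ω : Ω) : ℕ := (M.Phi i t ω).card

/-- Sum of the reviews left by buyers of type `i` before round `t`. -/
noncomputable def phiSum (i : Fin M.d) (t : ℕ) (ω : Ω) : ℝ :=
  ∑ s ∈ M.Phi i t ω, M.review s ω

/-- The lower confidence bound `LB_t` available to the round-`t` buyer. -/
noncomputable def LBt (t : ℕ) (ω : Ω) : ℝ :=
  if M.nPhi (M.itype t ω) t ω = 0 then 0
  else max 0 (M.phiSum (M.itype t ω) t ω / (M.nPhi (M.itype t ω) t ω)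
      - Real.sqrt (Real.log ((t : ℝ) / M.η) / (2 * (M.nPhi (M.itype t ω) t ω))))

/-- The seller's lower confidence bound `LB_{i,t}` on the value of type `i` at round `t`. -/
noncomputable def LBi (i : Fin M.d) (t : ℕ) (ω : Ω) : ℝ :=
  if M.nPhi i t ω = 0 then 0
  else max 0 (M.phiSum i t ω / (M.nPhi i t ω)
      - Real.sqrt (Real.log ((M.T : ℝ) / M.η) / (2 * (M.nPhi i t ω))))

/-- Length of Phase 1: `t_λ = 32 ln(d T²)/λ + 1` (rounded). -/
noncomputable def tlam : ℕ := ⌈32 * Real.log ((M.d : ℝ) * (M.T : ℝ) ^ 2) / M.lam⌉₊ + 1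

/-- Empirical frequency of type `i` during Phase 1. -/
noncomputable def qbar (i : Fin M.d) (ω : Ω) : ℝ :=
  (((Finset.Icc 1 M.tlam).filter (fun s => M.itype s ω = i)).card : ℝ) / M.tlam

/-- The set `Q` of types appearing on at least a `(3λ/4)`-fraction of Phase-1 rounds. -/
noncomputable def Qset (ω : Ω) : Finset (Fin M.d) :=
  Finset.univ.filter (fun i => 3 * M.lam / 4 ≤ M.qbar i ω)

/-- The confidence radius `ρ_t = sqrt(ln(d T²)/(2(t − t_λ)))`. -/
noncomputable def rho (t : ℕ) : ℝ :=
  Real.sqrt (Real.log ((M.d : ℝ) * (M.T : ℝ) ^ 2) / (2 * ((t : ℝ) - (M.tlam : ℝ))))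

/-- `ρ` with the convention `ρ_{t_λ} = 1`. -/
noncomputable def rho' (t : ℕ) : ℝ := if t = M.tlam then 1 else M.rho t

/-- The revenue estimate `μ̄_{i,t}`. -/
noncomputable def mubar (i : Fin M.d) (t : ℕ) (ω : Ω) : ℝ :=
  (∑ s ∈ Finset.Icc (M.tlam + 1) t,
      if M.buy s ω = true ∧ M.θ i ≤ M.θ (M.itype s ω) ∧ M.itype s ω ∈ M.Qset ω
      then M.θ i else 0) / ((t : ℝ) - (M.tlam : ℝ))

/-- Upper confidence bound `μ̂_{i,t}`. -/
noncomputable def muhat (i : Fin M.d) (t : ℕ) (ω : Ω) : ℝ := M.mubar i t ω + M.rho t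

/-- Lower confidence bound `μ̌_{i,t}`. -/
noncomputable def mucheck (i : Fin M.d) (t : ℕ) (ω : Ω) : ℝ := M.mubar i t ω - M.rho t

/-- `rev(p, Q) = p ⋅ Pr_{j∼P}[θ_j ≥ p and j ∈ Q]` (for the realized random set `Q`). -/
noncomputable def revQ (p : ℝ) (ω : Ω) : ℝ :=
  p * ∑ j, if p ≤ M.θ j ∧ j ∈ M.Qset ω then M.q j else 0

/-- The seller's realized revenue over the `T` rounds. -/
noncomputable def revenue (ω : Ω) : ℝ :=
  ∑ t ∈ Finset.Icc 1 M.T, M.price t ω * (if M.buy t ω then 1 else 0)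

/-- Expected regret: `T⋅p*⋅Pr[θ_i ≥ p*] − E[Σ_t p_t b_t]`. -/
noncomputable def regret : ℝ :=
  (M.T : ℝ) * (M.pstar * ∑ i, if M.pstar ≤ M.θ i then M.q i else 0)
    - ∫ ω, M.revenue ω ∂M.Pr

/-- The smallest appearance probability of any type. -/
noncomputable def qmin : ℝ := ⨅ i, M.q i

/-- σ-algebra of the history before round `t` (all types and potential reviews of
rounds `< t`). -/
noncomputable def histMS (t : ℕ) : MeasurableSpace Ω :=
  MeasurableSpace.comap
    (fun ω => fun s : Fin t => (M.itype (s : ℕ) ω, fun i => M.vdraw (s : ℕ) i ω))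
    inferInstance

/-- Buyers purchase iff the price is at most their threshold. -/
def BuyerRule : Prop := ∀ t ω, (M.buy t ω = true ↔ M.price t ω ≤ M.tau t ω)

/-- η-pessimism: the buyer's threshold is at least the lower confidence bound `LB_t`. -/
def Pessimistic : Prop := ∀ t ω, 1 ≤ t → t ≤ M.T → M.LBt t ω ≤ M.tau t ω

/-- The buyer's threshold is a function of the history (in particular of the past
reviews) and of the buyer's own type. -/
def TauAdapted : Prop :=
  ∀ t, Measurable[M.histMS t ⊔ MeasurableSpace.comap (M.itype t) inferInstance] (M.tau t)

/-- The seller's price is a measurable function of the observable history. -/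
def PriceAdapted : Prop := ∀ t, Measurable[M.histMS t] (M.price t)

end PricingModel

/-- A run of the two-phase pricing algorithm: Phase 1 (rounds `1,…,t_λ`) gives the item
for free; `S` is the successively refined active set of Phase 2, initialized at `Q`,
during which the price is `min_{i ∈ S_t} min(θ_i, LB_{i,t})` and types whose revenue
upper confidence bound falls below the best lower confidence bound are eliminated. -/
structure Algorithm {Ω : Type} [MeasurableSpace Ω] (M : PricingModel Ω) where
  S : ℕ → Ω → Finset (Fin M.d)
  h_phase1_price : ∀ t ω, t ≤ M.tlam → M.price t ω = 0
  h_phase1_buy : ∀ t ω, 1 ≤ t → t ≤ M.tlam → M.buy t ω = true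
  h_S_init : ∀ ω, S (M.tlam + 1) ω = M.Qset ω
  h_price2 : ∀ t ω, M.tlam < t →
      M.price t ω =
        if h : (S t ω).Nonempty then (S t ω).inf' h (fun i => min (M.θ i) (M.LBi i t ω))
        else 0
  h_S_step : ∀ t ω, M.tlam < t →
      S (t + 1) ω = (S t ω).filter
        (fun i => ∃ j ∈ S t ω, j ≤ i ∧ ∀ k ∈ S t ω, M.mucheck k t ω ≤ M.muhat j t ω)

/-!
While a type `i` is active, the posted price is at most `LB_{i,t} ≤ LB_t ≤ τ_t`, so every
type-`i` buyer purchases (and in Phase 1 everybody does); hence the number of type-`i`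
reviews before round `t` is the number of type-`i` arrivals, a sum of `t - 1` independent
Bernoulli(`q_i`) variables. A multiplicative Chernoff bound with `q_i ≥ λ/2` and
`λ (t - 1) ≥ 32 ln(d T²)` makes fewer than `λ (t - 1) / 4` arrivals have probability at most
`(d T²)⁻²`, and a union bound over at most `T` rounds and `d` types gives `1/T`.
-/

open Real

section Chernoff

variable {Ω ι : Type*} [MeasurableSpace Ω] {μ : Measure Ω} [IsProbabilityMeasure μ]

lemma mgf_indicator_one {E : Set Ω} (hE : MeasurableSet E) (t : ℝ) :
    mgf (E.indicator 1) μ t = 1 + μ.real E * (exp t - 1) := by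
  have hexp : (fun ω => exp (t * E.indicator 1 ω)) =
      fun ω => E.indicator (fun _ => exp t - 1) ω + 1 := by
    funext ω
    by_cases h : ω ∈ E <;> simp [h]
  rw [mgf, hexp, integral_add ((integrable_const _).indicator hE) (integrable_const 1),
    integral_indicator_const _ hE]
  simp only [integral_const, probReal_univ, smul_eq_mul]
  ring

/-- Chernoff's bound at `t = -log 2`, where each factor of the mgf is
`1 - μ (E k) / 2 ≤ exp (-p / 2)`. -/
theorem measureReal_card_filter_mem_le_le {E : ι → Set Ω} (hE : ∀ k, MeasurableSet (E k))
    (hind : iIndepFun (fun k => (E k).indicator (1 : Ω → ℝ)) μ) {p : ℝ}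
    (hp : ∀ k, p ≤ μ.real (E k)) (s : Finset ι) (ε : ℝ) :
    μ.real {ω | (#{k ∈ s | ω ∈ E k} : ℝ) ≤ ε} ≤ exp (ε * log 2 - #s * p / 2) := by
  set X := ∑ k ∈ s, (E k).indicator (1 : Ω → ℝ)
  have hu : -log 2 ≤ 0 := neg_nonpos.mpr (log_nonneg one_le_two)
  have hX : ∀ ω, X ω = #{k ∈ s | ω ∈ E k} := by
    intro ω
    simp [X, Finset.sum_apply, Set.indicator_apply]
  have hmeas : ∀ k, Measurable ((E k).indicator (1 : Ω → ℝ)) :=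
    fun k => measurable_const.indicator (hE k)
  have hXmeas : Measurable X := by simp only [X]; fun_prop
  have hint : Integrable (fun ω => exp (-log 2 * X ω)) μ := by
    refine (integrable_const 1).mono' (hXmeas.const_mul _).exp.aestronglyMeasurable
      (ae_of_all _ fun ω => ?_)
    rw [norm_of_nonneg (exp_pos _).le, exp_le_one_iff, hX]
    exact mul_nonpos_of_nonpos_of_nonneg hu (Nat.cast_nonneg _)
  have hmgf : mgf X μ (-log 2) ≤ exp (-(#s * p / 2)) := by
    rw [hind.mgf_sum hmeas]
    calc ∏ k ∈ s, mgf ((E k).indicator 1) μ (-log 2) ≤ ∏ _k ∈ s, exp (-(p / 2)) := by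
          refine prod_le_prod (fun k _ => mgf_nonneg) fun k _ => ?_
          rw [mgf_indicator_one (hE k), exp_neg, exp_log two_pos]
          linarith [add_one_le_exp (-(p / 2)), hp k]
      _ = exp (-(#s * p / 2)) := by rw [prod_const, ← exp_nat_mul]; ring_nf
  calc μ.real {ω | (#{k ∈ s | ω ∈ E k} : ℝ) ≤ ε} = μ.real {ω | X ω ≤ ε} := by simp_rw [hX]
    _ ≤ exp (-(-log 2) * ε) * mgf X μ (-log 2) :=
        measure_le_le_exp_mul_mgf ε hu hint
    _ ≤ exp (-(-log 2) * ε) * exp (-(#s * p / 2)) := by gcongr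
    _ = exp (ε * log 2 - #s * p / 2) := by rw [← exp_add]; ring_nf

end Chernoff

namespace PricingModel

variable {Ω : Type} [MeasurableSpace Ω] (M : PricingModel Ω)

def arrivals (i : Fin M.d) (t : ℕ) (ω : Ω) : Finset ℕ := {s ∈ Ico 1 t | M.itype s ω = i}

def fewArrivals (i : Fin M.d) (t : ℕ) : Set Ω :=
  {ω | (#(M.arrivals i t ω) : ℝ) < 1 / 4 * M.lam * ((t : ℝ) - 1)}

lemma one_le_tlam : 1 ≤ M.tlam := Nat.le_add_left 1 _

lemma LBi_le_LBt {s : ℕ} (hs : 1 ≤ s) (hsT : s ≤ M.T) {ω : Ω} :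
    M.LBi (M.itype s ω) s ω ≤ M.LBt s ω := by
  unfold LBi LBt
  split_ifs with h0
  · exact le_rfl
  refine max_le_max le_rfl (sub_le_sub_left (sqrt_le_sqrt ?_) _)
  have hn : (0 : ℝ) < 2 * M.nPhi (M.itype s ω) s ω := by positivity
  have hη := M.hη.1
  have hs' : (1 : ℝ) ≤ s := by exact_mod_cast hs
  gcongr

lemma measureReal_itype_eq (s : ℕ) (i : Fin M.d) : M.Pr.real {ω | M.itype s ω = i} = M.q i := by
  rw [measureReal_def, M.h_itype_law, ENNReal.toReal_ofReal (M.hq_nonneg i)]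

lemma iIndepFun_indicator_itype_eq (i : Fin M.d) :
    iIndepFun (fun s => {ω | M.itype s ω = i}.indicator (1 : Ω → ℝ)) M.Pr := by
  have hg : Measurable
      ({p : Fin M.d × (Fin M.d → ℝ) | p.1 = i}.indicator (1 : Fin M.d × (Fin M.d → ℝ) → ℝ)) :=
    measurable_const.indicator (measurable_fst (measurableSet_singleton i))
  convert M.h_indep.comp _ fun _ => hg using 1
  ext s ω
  simp [Set.indicator_apply]

lemma lam_mul_le_of_tlam_lt {t : ℕ} (ht : M.tlam < t) :
    32 * log (M.d * M.T ^ 2) ≤ M.lam * ((t : ℝ) - 1) := by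
  have htl : 32 * log (M.d * M.T ^ 2) / M.lam ≤ ((t : ℝ) - 1) := by
    have : (M.tlam : ℝ) ≤ (t : ℝ) - 1 := by
      rw [le_sub_iff_add_le]; exact_mod_cast ht
    refine le_trans ?_ this
    rw [tlam]; push_cast
    linarith [Nat.le_ceil (32 * log (M.d * M.T ^ 2) / M.lam)]
  rwa [div_le_iff₀' M.hlam.1] at htl

lemma measure_fewArrivals_le {i : Fin M.d} (hqi : M.lam / 2 ≤ M.q i) {t : ℕ}
    (ht : M.tlam < t) :
    M.Pr (M.fewArrivals i t) ≤ ENNReal.ofReal (((M.d : ℝ) * M.T ^ 2)⁻¹ ^ 2) := by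
  have := M.hPr
  have hchernoff := measureReal_card_filter_mem_le_le (E := fun s => {ω | M.itype s ω = i})
    (fun s => (M.h_itype_meas s) (measurableSet_singleton i)) (M.iIndepFun_indicator_itype_eq i)
    (fun s => (M.measureReal_itype_eq s i).symm ▸ hqi) (Ico 1 t) (1 / 4 * M.lam * ((t : ℝ) - 1))
  have hcard : ((#(Ico 1 t) : ℕ) : ℝ) = (t : ℝ) - 1 := by
    rw [Nat.card_Ico, Nat.cast_sub (M.one_le_tlam.trans ht.le), Nat.cast_one]
  have hdT : (1 : ℝ) ≤ M.d * M.T ^ 2 := one_le_mul_of_one_le_of_one_le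
    (by exact_mod_cast M.hd) (one_le_pow₀ (by exact_mod_cast M.hT))
  have hexponent : 1 / 4 * M.lam * ((t : ℝ) - 1) * log 2 - ((t : ℝ) - 1) * (M.lam / 2) / 2
      ≤ -2 * log (M.d * M.T ^ 2) := by
    -- `32 (1 - log 2) / 4 > 2`
    have hlog := log_nonneg hdT
    have hlam := M.lam_mul_le_of_tlam_lt ht
    have := mul_le_mul_of_nonneg_left log_two_lt_d9.le (show 0 ≤ M.lam * ((t : ℝ) - 1) by linarith)
    linarith
  rw [← ofReal_measureReal]
  refine ENNReal.ofReal_le_ofReal ?_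
  calc M.Pr.real (M.fewArrivals i t)
      ≤ exp (-2 * log (M.d * M.T ^ 2)) := by
        refine (measureReal_mono fun ω hω => ?_).trans (hchernoff.trans (exp_le_exp.mpr ?_))
        · simp only [fewArrivals, arrivals, Set.mem_ofPred_eq] at hω ⊢
          -- the two filters differ only in their `Decidable` instances
          convert hω.le
        · rwa [hcard]
    _ = ((M.d : ℝ) * M.T ^ 2)⁻¹ ^ 2 := by
        rw [show -2 * log (M.d * M.T ^ 2) = -log (M.d * M.T ^ 2) + -log (M.d * M.T ^ 2) by ring,
          exp_add, exp_neg, exp_log (by linarith)]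
        ring

end PricingModel

namespace Algorithm

variable {Ω : Type} [MeasurableSpace Ω] {M : PricingModel Ω} (A : Algorithm M)

lemma S_subset_S (ω : Ω) {s t : ℕ} (hs : M.tlam < s) (hst : s ≤ t) : A.S t ω ⊆ A.S s ω := by
  induction t, hst using Nat.le_induction with
  | base => exact subset_rfl
  | succ n hn ih =>
      rw [A.h_S_step n ω (hs.trans_le hn)]
      exact (filter_subset _ _).trans ih

lemma buy_of_itype_mem_S (hpess : M.Pessimistic) (hbr : M.BuyerRule) {ω : Ω} {s : ℕ}
    (hs : M.tlam < s) (hsT : s ≤ M.T) (hi : M.itype s ω ∈ A.S s ω) : M.buy s ω = true := by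
  have hs1 : 1 ≤ s := M.one_le_tlam.trans hs.le
  have hprice : M.price s ω ≤ M.LBi (M.itype s ω) s ω := by
    rw [A.h_price2 s ω hs, dif_pos ⟨_, hi⟩]
    exact (inf'_le _ hi).trans (min_le_right _ _)
  exact (hbr s ω).mpr (hprice.trans ((M.LBi_le_LBt hs1 hsT).trans (hpess s ω hs1 hsT)))

lemma nPhi_eq_card_arrivals (hpess : M.Pessimistic) (hbr : M.BuyerRule) {ω : Ω} {t : ℕ}
    (htT : t ≤ M.T) {i : Fin M.d} (hi : i ∈ A.S t ω) :
    M.nPhi i t ω = #(M.arrivals i t ω) := by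
  refine congrArg card (filter_congr fun s hs => ?_)
  rw [mem_Ico] at hs
  refine and_iff_right_of_imp fun hty => ?_
  rcases le_or_gt s M.tlam with hs1 | hs2
  · exact A.h_phase1_buy s ω hs.1 hs1
  · exact A.buy_of_itype_mem_S hpess hbr hs2 (by omega) (hty ▸ A.S_subset_S ω hs2 hs.2.le hi)

lemma setOf_not_many_reviews_subset (hpess : M.Pessimistic) (hbr : M.BuyerRule) :
    {ω | ¬ ∀ t, M.tlam < t → t ≤ M.T → ∀ i ∈ A.S t ω, M.lam / 2 ≤ M.q i →
        (1 / 4) * M.lam * ((t : ℝ) - 1) ≤ (M.nPhi i t ω : ℝ)} ⊆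
      ⋃ ti ∈ Icc (M.tlam + 1) M.T ×ˢ ({i | M.lam / 2 ≤ M.q i} : Finset (Fin M.d)),
        M.fewArrivals ti.2 ti.1 := by
  intro ω hω
  simp only [Set.mem_ofPred_eq, not_forall, not_le] at hω
  obtain ⟨t, ht, htT, i, hiS, hqi, hfew⟩ := hω
  rw [A.nPhi_eq_card_arrivals hpess hbr htT hiS] at hfew
  exact Set.mem_biUnion (x := (t, i)) (by simp [hqi]; omega) hfew

end Algorithm

lemma natCast_mul_ofReal_inv_sq_le {n d T : ℕ} (hd : 1 ≤ d) (hT : 1 ≤ T) (hn : n ≤ T * d) :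
    (n : ℝ≥0∞) * ENNReal.ofReal (((d : ℝ) * T ^ 2)⁻¹ ^ 2) ≤ 1 / T := by
  have hd' : (1 : ℝ) ≤ d := by exact_mod_cast hd
  have hT' : (1 : ℝ) ≤ T := by exact_mod_cast hT
  have hn' : (n : ℝ) ≤ T * d := by exact_mod_cast hn
  rw [← ENNReal.ofReal_natCast n, ← ENNReal.ofReal_mul (by positivity), one_div,
    ← ENNReal.ofReal_natCast T, ← ENNReal.ofReal_inv_of_pos (by positivity)]
  refine ENNReal.ofReal_le_ofReal ((mul_le_mul_of_nonneg_right hn' (by positivity)).trans ?_)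
  rw [show (T : ℝ) * d * ((d : ℝ) * T ^ 2)⁻¹ ^ 2 = (T : ℝ)⁻¹ * ((d : ℝ) * T ^ 2)⁻¹ by field_simp]
  exact mul_le_of_le_one_right (by positivity)
    (inv_le_one_of_one_le₀ (one_le_mul_of_one_le_of_one_le hd' (one_le_pow₀ hT')))

/-- if `q_min ≤ 2λ`, then except with probability `1/T`, every active
type `i ∈ S_t` with `q_i ≥ λ/2` of every Phase-2 round `t` has at least
`(1/4) λ (t−1)` reviews. -/
theorem lemma_many_reviews_small_qmin :
    ∀ (Ω : Type) [MeasurableSpace Ω] (M : PricingModel Ω) (A : Algorithm M),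
      M.Pessimistic → M.BuyerRule → M.TauAdapted →
      M.qmin ≤ 2 * M.lam →
      M.Pr {ω | ¬ ∀ t, M.tlam < t → t ≤ M.T → ∀ i ∈ A.S t ω, M.lam / 2 ≤ M.q i →
          (1 / 4) * M.lam * ((t : ℝ) - 1) ≤ (M.nPhi i t ω : ℝ)}
        ≤ 1 / (M.T : ℝ≥0∞) := by
  intro Ω _ M A hpess hbr _ _
  let R := Icc (M.tlam + 1) M.T ×ˢ ({i | M.lam / 2 ≤ M.q i} : Finset (Fin M.d))
  have hR : #R ≤ M.T * M.d := by
    rw [card_product, Nat.card_Icc]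
    exact Nat.mul_le_mul (by omega) ((card_filter_le _ _).trans_eq (card_fin _))
  calc _ ≤ M.Pr (⋃ ti ∈ R, M.fewArrivals ti.2 ti.1) :=
        measure_mono (A.setOf_not_many_reviews_subset hpess hbr)
    _ ≤ ∑ ti ∈ R, M.Pr (M.fewArrivals ti.2 ti.1) := measure_biUnion_finset_le R _
    _ ≤ #R • ENNReal.ofReal (((M.d : ℝ) * M.T ^ 2)⁻¹ ^ 2) := sum_le_card_nsmul _ _ _ fun ti hti => by
        simp only [R, mem_product, mem_Icc, mem_filter] at hti
        exact M.measure_fewArrivals_le hti.2.2 (by omega)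
    _ ≤ 1 / (M.T : ℝ≥0∞) := by
        rw [nsmul_eq_mul]
        exact natCast_mul_ofReal_inv_sq_le M.hd M.hT hR
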